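/- Let G be a group acting on a set X and let x, y ∈ X with Gx ≠ Gy. There exists a non-bijective G-equivariant transformation τ ∈ End_G(X) \ Aut_G(X) with τ(x) = y if and only if G_x ≤ G_y (the stabilizer of x is a subgroup of the stabilizer of y). -/

import Mathlib

/-- The monoid of all `G`-equivariant transformations of `X`, as a submonoid of
`Function.End X` (composition of functions). -/
def gEnd (G X : Type*) [Group G] [MulAction G X] : Submonoid (Function.End X) where
  carrier := {f | ∀ (g : G) (x : X), f (g • x) = g • f x}
  one_mem' := fun _ _ => rfl
  mul_mem' := fun {f₁ f₂} h₁ h₂ g x => by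
    show f₁ (f₂ (g • x)) = g • f₁ (f₂ x)
    rw [h₂, h₁]

/-- The group of all bijective `G`-equivariant transformations of `X`, as a subgroup of
`Equiv.Perm X`. -/
def gAut (G X : Type*) [Group G] [MulAction G X] : Subgroup (Equiv.Perm X) where
  carrier := {f | ∀ (g : G) (x : X), f (g • x) = g • f x}
  one_mem' := fun _ _ => rfl
  mul_mem' := fun {f₁ f₂} h₁ h₂ g x => by
    show f₁ (f₂ (g • x)) = g • f₁ (f₂ x)
    rw [h₂, h₁]
  inv_mem' := fun {f} hf g x => f.injective (by
    show f (f.symm (g • x)) = f (g • f.symm x)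
    rw [Equiv.apply_symm_apply, hf, Equiv.apply_symm_apply])

/-!
If `τ` is equivariant then `g • x = x` forces `g • τ x = τ x`, so `G_x ≤ G_{τ x}`.
Conversely, `G_x ≤ G_y` makes `g • x ↦ g • y` well defined on the orbit of `x`; extended by the
identity off that orbit it is equivariant, and it misses `x`: the orbit of `x` is sent into the
orbit of `y`, which does not contain `x`, and every other point is fixed.
-/

namespace MulAction

variable {G X : Type*} [Group G] [MulAction G X]

theorem stabilizer_le_stabilizer_apply_of_mem_gEnd {τ : Function.End X} (hτ : τ ∈ gEnd G X)
    (x : X) : stabilizer G x ≤ stabilizer G (τ x) := fun g hg => by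
  rw [mem_stabilizer_iff] at hg ⊢
  rw [← hτ g x, hg]

theorem smul_eq_smul_of_stabilizer_le {x y : X} (hst : stabilizer G x ≤ stabilizer G y)
    {g h : G} (hgh : g • x = h • x) : g • y = h • y := by
  have hx : h⁻¹ * g ∈ stabilizer G x := by
    rw [mem_stabilizer_iff, mul_smul, hgh, inv_smul_smul]
  have hy : (h⁻¹ * g) • y = y := hst hx
  rwa [mul_smul, inv_smul_eq_iff] at hy

variable (G) in
open Classical in
/-- The choice of `g` with `g • x = z` is immaterial when `G_x ≤ G_y`. -/
noncomputable def orbitTransport (x y : X) : X → X := fun z =>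
  if h : z ∈ orbit G x then (mem_orbit_iff.mp h).choose • y else z

variable {x y : X}

theorem orbitTransport_smul (hst : stabilizer G x ≤ stabilizer G y) (g : G) :
    orbitTransport G x y (g • x) = g • y := by
  have h : g • x ∈ orbit G x := mem_orbit x g
  rw [orbitTransport, dif_pos h]
  exact smul_eq_smul_of_stabilizer_le hst (mem_orbit_iff.mp h).choose_spec

theorem orbitTransport_of_notMem {z : X} (hz : z ∉ orbit G x) :
    orbitTransport G x y z = z := by
  rw [orbitTransport, dif_neg hz]

theorem orbitTransport_mem_gEnd (hst : stabilizer G x ≤ stabilizer G y) :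
    orbitTransport G x y ∈ gEnd G X := by
  intro g z
  by_cases hz : z ∈ orbit G x
  · obtain ⟨k, rfl⟩ := hz
    change orbitTransport G x y (g • k • x) = g • orbitTransport G x y (k • x)
    rw [← mul_smul, orbitTransport_smul hst, orbitTransport_smul hst, mul_smul]
  · have hgz : g • z ∉ orbit G x := by
      rwa [mem_orbit_symm, orbit_smul, mem_orbit_symm]
    change orbitTransport G x y (g • z) = g • orbitTransport G x y z
    rw [orbitTransport_of_notMem hz, orbitTransport_of_notMem hgz]

theorem orbitTransport_not_surjective (hst : stabilizer G x ≤ stabilizer G y)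
    (hxy : orbit G x ≠ orbit G y) : ¬Function.Surjective (orbitTransport G x y) := by
  intro hsurj
  obtain ⟨z, hz⟩ := hsurj x
  by_cases hzx : z ∈ orbit G x
  · obtain ⟨k, rfl⟩ := hzx
    rw [orbitTransport_smul hst] at hz
    exact hxy (orbit_eq_iff.mpr ⟨k, hz⟩)
  · rw [orbitTransport_of_notMem hzx] at hz
    exact hzx (hz ▸ mem_orbit_self z)

end MulAction

open MulAction

/-- For `x, y` in distinct orbits, there is a non-bijective
`τ ∈ End_G(X) \ Aut_G(X)` with `τ(x) = y` iff `G_x ≤ G_y`. -/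
theorem stmt4 {G X : Type*} [Group G] [MulAction G X] (x y : X)
    (hxy : MulAction.orbit G x ≠ MulAction.orbit G y) :
    (∃ τ ∈ gEnd G X, ¬Function.Bijective τ ∧ τ x = y) ↔
      MulAction.stabilizer G x ≤ MulAction.stabilizer G y := by
  constructor
  · rintro ⟨τ, hτ, -, rfl⟩
    exact stabilizer_le_stabilizer_apply_of_mem_gEnd hτ x
  · intro hst
    refine ⟨orbitTransport G x y, orbitTransport_mem_gEnd hst,
      fun hbij => orbitTransport_not_surjective hst hxy hbij.surjective, ?_⟩
    simpa using orbitTransport_smul hst (1 : G)
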